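/- arXiv:2507.04312 — 9 statements merged into one kernel-verified Lean document; each statement's English description precedes it below -/
import Mathlib

section
/- Soundness of mb*: for any set Γ of mb*-formulas and any mb*-formula φ, if Γ ⊢ φ in mb*, then Γ ⊨ φ, i.e., every mb*-valuation that assigns 1 to all members of Γ assigns 1 to φ. -/
/-- Formulas of the logic mb*, built from countably many propositional
variables via ∧ (`conj`), ∨ (`disj`), → (`impl`), ¬ (`neg`) and ★ (`star`). -/
inductive MbF : Type
  | var : ℕ → MbF
  | conj : MbF → MbF → MbF
  | disj : MbF → MbF → MbF
  | impl : MbF → MbF → MbF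
  | neg : MbF → MbF
  | star : MbF → MbF

/-- Axiom schemas of the Hilbert-style presentation of mb*. -/
inductive MbAxiom : MbF → Prop
  | ax1 (α β : MbF) : MbAxiom (.impl α (.impl β α))
  | ax2 (α β γ : MbF) :
      MbAxiom (.impl (.impl α β) (.impl (.impl α (.impl β γ)) (.impl α γ)))
  | ax3 (α β : MbF) : MbAxiom (.impl α (.impl β (.conj α β)))
  | ax4 (α β : MbF) : MbAxiom (.impl (.conj α β) α)
  | ax5 (α β : MbF) : MbAxiom (.impl (.conj α β) β)
  | ax6 (α β : MbF) : MbAxiom (.impl α (.disj α β))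
  | ax7 (α β : MbF) : MbAxiom (.impl β (.disj α β))
  | ax8 (α β γ : MbF) :
      MbAxiom (.impl (.impl α γ) (.impl (.impl β γ) (.impl (.disj α β) γ)))
  | ax9 (α β : MbF) : MbAxiom (.disj α (.impl α β))
  | ax10 (α β : MbF) : MbAxiom (.impl α (.impl (.neg α) β))
  | ax11 (α : MbF) : MbAxiom (.disj α (.disj (.neg α) (.star α)))

/-- Derivability in mb*: `MbDeriv Γ φ` means Γ ⊢ φ, i.e. φ has a derivation
from Γ using axiom instances, members of Γ, and modus ponens. -/
inductive MbDeriv (Γ : Set MbF) : MbF → Prop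
  | ax {φ : MbF} : MbAxiom φ → MbDeriv Γ φ
  | hyp {φ : MbF} : φ ∈ Γ → MbDeriv Γ φ
  | mp {φ ψ : MbF} : MbDeriv Γ (.impl φ ψ) → MbDeriv Γ φ → MbDeriv Γ ψ

/-- An mb*-valuation: a two-valued map satisfying the semantic clauses of mb*. -/
def IsMbVal (v : MbF → Fin 2) : Prop :=
  (∀ α β : MbF, v (.disj α β) = 1 ↔ v α = 1 ∨ v β = 1) ∧
  (∀ α β : MbF, v (.conj α β) = 1 ↔ v α = 1 ∧ v β = 1) ∧
  (∀ α β : MbF, v (.impl α β) = 1 ↔ v α = 0 ∨ v β = 1) ∧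
  (∀ α : MbF, v α = 1 → v (.neg α) = 0) ∧
  (∀ α : MbF, v α = 0 → v (.neg α) = 0 → v (.star α) = 1)

/-- An mb*-probability function: a `[0,1]`-valued function on formulas
satisfying tautologicity, antitautologicity, comparison and finite additivity. -/
def IsMbProb (P : MbF → ℝ) : Prop :=
  (∀ φ : MbF, P φ ∈ Set.Icc (0 : ℝ) 1) ∧
  (∀ φ : MbF, MbDeriv ∅ φ → P φ = 1) ∧
  (∀ φ : MbF, (∀ ψ : MbF, MbDeriv {φ} ψ) → P φ = 0) ∧
  (∀ φ ψ : MbF, MbDeriv {ψ} φ → P ψ ≤ P φ) ∧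
  (∀ φ ψ : MbF, P (.disj φ ψ) = P φ + P ψ - P (.conj φ ψ))

/-- Soundness of mb*. -/
theorem mb_soundness (Γ : Set MbF) (φ : MbF) (h : MbDeriv Γ φ) :
    ∀ v : MbF → Fin 2, IsMbVal v → (∀ ψ ∈ Γ, v ψ = 1) → v φ = 1 := by
  intro v hv hΓ
  obtain ⟨hd, hc, hi, hn, hs⟩ := hv
  induction h with
  | hyp hφ => exact hΓ _ hφ
  | mp _ _ ih1 ih2 =>
    rcases (hi _ _).1 ih1 with h0 | h1
    · rw [ih2] at h0; exact absurd h0 (by decide)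
    · exact h1
  | ax ha =>
    have two : ∀ x : Fin 2, x = 0 ∨ x = 1 := by decide
    cases ha with
    | ax1 α β => exact (hi _ _).2 <| (two (v α)).imp_right fun h => (hi _ _).2 (Or.inr h)
    | ax2 α β γ =>
      apply (hi _ _).2
      rcases two (v (MbF.impl α β)) with h | h
      · exact Or.inl h
      · refine Or.inr <| (hi _ _).2 ?_
        rcases two (v (MbF.impl α (MbF.impl β γ))) with h2 | h2
        · exact Or.inl h2
        · refine Or.inr <| (hi _ _).2 ?_
          rcases two (v α) with h3 | h3
          · exact Or.inl h3
          · rcases (hi _ _).1 h with h4 | h4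
            · rw [h3] at h4; exact absurd h4 (by decide)
            · rcases (hi _ _).1 h2 with h5 | h5
              · rw [h3] at h5; exact absurd h5 (by decide)
              · rcases (hi _ _).1 h5 with h6 | h6
                · rw [h4] at h6; exact absurd h6 (by decide)
                · exact Or.inr h6
    | ax3 α β =>
      apply (hi _ _).2
      rcases two (v α) with h | h
      · exact Or.inl h
      · refine Or.inr <| (hi _ _).2 ?_
        rcases two (v β) with h2 | h2
        · exact Or.inl h2
        · exact Or.inr <| (hc _ _).2 ⟨h, h2⟩
    | ax4 α β =>
      apply (hi _ _).2
      rcases two (v (MbF.conj α β)) with h | h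
      · exact Or.inl h
      · exact Or.inr ((hc _ _).1 h).1
    | ax5 α β =>
      apply (hi _ _).2
      rcases two (v (MbF.conj α β)) with h | h
      · exact Or.inl h
      · exact Or.inr ((hc _ _).1 h).2
    | ax6 α β =>
      apply (hi _ _).2
      rcases two (v α) with h | h
      · exact Or.inl h
      · exact Or.inr <| (hd _ _).2 (Or.inl h)
    | ax7 α β =>
      apply (hi _ _).2
      rcases two (v β) with h | h
      · exact Or.inl h
      · exact Or.inr <| (hd _ _).2 (Or.inr h)
    | ax8 α β γ =>
      apply (hi _ _).2
      rcases two (v (MbF.impl α γ)) with h | h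
      · exact Or.inl h
      · refine Or.inr <| (hi _ _).2 ?_
        rcases two (v (MbF.impl β γ)) with h2 | h2
        · exact Or.inl h2
        · refine Or.inr <| (hi _ _).2 ?_
          rcases two (v (MbF.disj α β)) with h3 | h3
          · exact Or.inl h3
          · refine Or.inr ?_
            rcases (hd _ _).1 h3 with ha | hb
            · rcases (hi _ _).1 h with h4 | h4
              · rw [ha] at h4; exact absurd h4 (by decide)
              · exact h4
            · rcases (hi _ _).1 h2 with h4 | h4
              · rw [hb] at h4; exact absurd h4 (by decide)
              · exact h4
    | ax9 α β =>
      apply (hd _ _).2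
      rcases two (v α) with h | h
      · exact Or.inr <| (hi _ _).2 (Or.inl h)
      · exact Or.inl h
    | ax10 α β =>
      apply (hi _ _).2
      rcases two (v α) with h | h
      · exact Or.inl h
      · refine Or.inr <| (hi _ _).2 (Or.inl (hn _ h))
    | ax11 α =>
      apply (hd _ _).2
      rcases two (v α) with h | h
      · refine Or.inr <| (hd _ _).2 ?_
        rcases two (v (MbF.neg α)) with h2 | h2
        · exact Or.inr (hs _ h h2)
        · exact Or.inl h2
      · exact Or.inl h
end

section
/- If Γ is a set of mb*-formulas that is maximal relative to a formula φ in mb* (i.e., Γ ⊬ φ but Γ ∪ {ψ} ⊢ φ for every formula ψ ∉ Γ), then the map v from mb*-formulas to {0,1} defined by v(ψ)=1 iff ψ ∈ Γ is an mb*-valuation. -/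
lemma MbDeriv.mono {Γ Δ : Set MbF} {ψ : MbF} (h : Γ ⊆ Δ) (d : MbDeriv Γ ψ) :
    MbDeriv Δ ψ := by
  induction d with
  | ax a => exact .ax a
  | hyp m => exact .hyp (h m)
  | mp _ _ ih1 ih2 => exact .mp ih1 ih2

lemma MbDeriv.cut {Γ : Set MbF} {ψ χ : MbF} (d : MbDeriv (Γ ∪ {ψ}) χ)
    (h : MbDeriv Γ ψ) : MbDeriv Γ χ := by
  induction d with
  | ax a => exact .ax a
  | hyp m =>
    rcases m with m | m
    · exact .hyp m
    · rcases m with rfl; exact h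
  | mp _ _ ih1 ih2 => exact .mp ih1 ih2

lemma MbDeriv.id (Γ : Set MbF) (ψ : MbF) : MbDeriv Γ (.impl ψ ψ) :=
  .mp (.mp (.ax (.ax2 ψ (.impl ψ ψ) ψ)) (.ax (.ax1 ψ ψ))) (.ax (.ax1 ψ (.impl ψ ψ)))

lemma MbDeriv.ded {Γ : Set MbF} {ψ χ : MbF} (d : MbDeriv (Γ ∪ {ψ}) χ) :
    MbDeriv Γ (.impl ψ χ) := by
  induction d with
  | @ax χ a => exact .mp (.ax (.ax1 χ ψ)) (.ax a)
  | @hyp χ m =>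
    rcases m with m | m
    · exact .mp (.ax (.ax1 χ ψ)) (.hyp m)
    · rcases m with rfl; exact MbDeriv.id Γ _
  | @mp a b _ _ ih1 ih2 =>
    exact .mp (.mp (.ax (.ax2 ψ a b)) ih2) ih1

/-- The characteristic map of a set maximal relative to φ is an mb*-valuation. -/
theorem mb_maximal_gives_valuation (Γ : Set MbF) (φ : MbF)
    (hnd : ¬ MbDeriv Γ φ) (hmax : ∀ ψ : MbF, ψ ∉ Γ → MbDeriv (Γ ∪ {ψ}) φ)
    (v : MbF → Fin 2) (hv : ∀ ψ : MbF, v ψ = 1 ↔ ψ ∈ Γ) :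
    IsMbVal v := by
  have h01 : ∀ x : Fin 2, x = 0 ↔ ¬ x = 1 := by decide
  have hmem : ∀ ψ, MbDeriv Γ ψ → ψ ∈ Γ := by
    intro ψ hψ
    by_contra hn
    exact hnd ((hmax ψ hn).cut hψ)
  have hdisj : ∀ α β : MbF, MbDeriv Γ (.disj α β) → α ∈ Γ ∨ β ∈ Γ := by
    intro α β hab
    by_contra hn
    push_neg at hn
    have h1 : MbDeriv Γ (.impl α φ) := (hmax α hn.1).ded
    have h2 : MbDeriv Γ (.impl β φ) := (hmax β hn.2).ded
    exact hnd (.mp (.mp (.mp (.ax (.ax8 α β φ)) h1) h2) hab)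
  refine ⟨?_, ?_, ?_, ?_, ?_⟩
  · intro α β
    simp only [hv]
    constructor
    · intro h; exact hdisj α β (.hyp h)
    · rintro (h | h)
      · exact hmem _ (.mp (.ax (.ax6 α β)) (.hyp h))
      · exact hmem _ (.mp (.ax (.ax7 α β)) (.hyp h))
  · intro α β
    simp only [hv]
    constructor
    · intro h
      exact ⟨hmem _ (.mp (.ax (.ax4 α β)) (.hyp h)),
             hmem _ (.mp (.ax (.ax5 α β)) (.hyp h))⟩
    · rintro ⟨h1, h2⟩
      exact hmem _ (.mp (.mp (.ax (.ax3 α β)) (.hyp h1)) (.hyp h2))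
  · intro α β
    rw [h01, hv, hv, hv]
    constructor
    · intro h
      by_cases hα : α ∈ Γ
      · exact Or.inr (hmem _ (.mp (.hyp h) (.hyp hα)))
      · exact Or.inl hα
    · rintro (h | h)
      · rcases hdisj α (.impl α β) (.ax (.ax9 α β)) with h' | h'
        · exact absurd h' h
        · exact h'
      · exact hmem _ (.mp (.ax (.ax1 β α)) (.hyp h))
  · intro α h
    rw [hv] at h
    rw [h01, hv]
    intro hn
    exact hnd (.mp (.mp (.ax (.ax10 α φ)) (.hyp h)) (.hyp hn))
  · intro α h1 h2
    rw [h01, hv] at h1 h2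
    rw [hv]
    rcases hdisj α _ (.ax (.ax11 α)) with h | h
    · exact absurd h h1
    · rcases hdisj _ _ (.hyp h) with h' | h'
      · exact absurd h' h2
      · exact h'
end

section
/- Completeness of mb*: for any set Γ of mb*-formulas and any mb*-formula φ, if Γ ⊨ φ (every mb*-valuation assigning 1 to all members of Γ assigns 1 to φ), then Γ ⊢ φ in mb*. -/
/-! The Lindenbaum–Łoś argument: if `Γ ⊬ φ`, Zorn's lemma extends `Γ` to a set `Δ` maximal among
those not deriving `φ`. Such a `Δ` is closed under derivability and prime (by the deduction theorem
and axiom 8), so its characteristic function is an mb*-valuation: axioms 3–7 give the clauses for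
`∧` and `∨`, axioms 1 and 9 the one for `→`, axiom 10 the one for `¬` and axiom 11 the one for `★`.
It satisfies `Γ` but not `φ`. -/

namespace MbDeriv

variable {Γ Δ : Set MbF} {φ ψ : MbF}

theorem mono_s5 (h : MbDeriv Γ φ) (hΓΔ : Γ ⊆ Δ) : MbDeriv Δ φ := by
  induction h with
  | ax hax => exact .ax hax
  | hyp hmem => exact .hyp (hΓΔ hmem)
  | mp _ _ ihImpl ihArg => exact .mp ihImpl ihArg

theorem impl_self (Γ : Set MbF) (φ : MbF) : MbDeriv Γ (.impl φ φ) :=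
  .mp (.mp (.ax (.ax2 φ (.impl φ φ) φ)) (.ax (.ax1 φ φ))) (.ax (.ax1 φ (.impl φ φ)))

theorem deduction (h : MbDeriv (insert ψ Γ) φ) : MbDeriv Γ (.impl ψ φ) := by
  induction h with
  | ax hax => exact .mp (.ax (.ax1 _ ψ)) (.ax hax)
  | hyp hmem =>
    rcases Set.mem_insert_iff.mp hmem with rfl | hmem
    · exact impl_self Γ _
    · exact .mp (.ax (.ax1 _ ψ)) (.hyp hmem)
  | mp _ _ ihImpl ihArg => exact .mp (.mp (.ax (.ax2 ψ _ _)) ihArg) ihImpl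

theorem exists_finite_subset (h : MbDeriv Γ φ) : ∃ s ⊆ Γ, s.Finite ∧ MbDeriv s φ := by
  induction h with
  | ax hax => exact ⟨∅, Set.empty_subset _, Set.finite_empty, .ax hax⟩
  | @hyp χ hmem => exact ⟨{χ}, Set.singleton_subset_iff.mpr hmem, Set.finite_singleton χ, .hyp rfl⟩
  | mp _ _ ihImpl ihArg =>
    obtain ⟨s, hsΓ, hs, hsd⟩ := ihImpl
    obtain ⟨t, htΓ, ht, htd⟩ := ihArg
    exact ⟨s ∪ t, Set.union_subset hsΓ htΓ, hs.union ht,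
      .mp (hsd.mono_s5 Set.subset_union_left) (htd.mono_s5 Set.subset_union_right)⟩

theorem exists_mem_of_sUnion {c : Set (Set MbF)} (hne : c.Nonempty) (hc : DirectedOn (· ⊆ ·) c)
    (h : MbDeriv (⋃₀ c) φ) : ∃ Δ ∈ c, MbDeriv Δ φ := by
  obtain ⟨s, hsc, hs, hsd⟩ := h.exists_finite_subset
  obtain ⟨Δ, hΔc, hsΔ⟩ := hc.exists_mem_subset_of_finite_of_subset_sUnion hne hs hsc
  exact ⟨Δ, hΔc, hsd.mono_s5 hsΔ⟩

end MbDeriv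

abbrev IsMaxNonDeriving (φ : MbF) (Δ : Set MbF) : Prop :=
  Maximal (fun Δ => ¬ MbDeriv Δ φ) Δ

theorem exists_isMaxNonDeriving {Γ : Set MbF} {φ : MbF} (h : ¬ MbDeriv Γ φ) :
    ∃ Δ, Γ ⊆ Δ ∧ IsMaxNonDeriving φ Δ := by
  refine zorn_subset_nonempty {Δ | ¬ MbDeriv Δ φ} ?_ Γ h
  intro c hc hchain hne
  refine ⟨⋃₀ c, fun hd => ?_, fun Δ hΔ => Set.subset_sUnion_of_mem hΔ⟩
  obtain ⟨Δ, hΔc, hΔd⟩ := MbDeriv.exists_mem_of_sUnion hne hchain.directedOn hd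
  exact hc hΔc hΔd

namespace IsMaxNonDeriving

variable {Δ : Set MbF} {φ ψ α β : MbF} (hΔ : IsMaxNonDeriving φ Δ)
include hΔ

theorem not_deriv : ¬ MbDeriv Δ φ := hΔ.prop

theorem deriv_insert (hψ : ψ ∉ Δ) : MbDeriv (insert ψ Δ) φ := by
  by_contra hd
  exact hψ (hΔ.mem_of_prop_insert hd)

theorem mem_of_deriv (h : MbDeriv Δ ψ) : ψ ∈ Δ := by
  by_contra hψ
  exact hΔ.not_deriv (.mp (hΔ.deriv_insert hψ).deduction h)

theorem mem_or_mem_of_disj_mem (h : .disj α β ∈ Δ) : α ∈ Δ ∨ β ∈ Δ := by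
  by_contra! hαβ
  have hαφ := (hΔ.deriv_insert hαβ.1).deduction
  have hβφ := (hΔ.deriv_insert hαβ.2).deduction
  exact hΔ.not_deriv (.mp (.mp (.mp (.ax (.ax8 α β φ)) hαφ) hβφ) (.hyp h))

theorem disj_mem_iff : .disj α β ∈ Δ ↔ α ∈ Δ ∨ β ∈ Δ := by
  refine ⟨hΔ.mem_or_mem_of_disj_mem, ?_⟩
  rintro (hα | hβ)
  · exact hΔ.mem_of_deriv (.mp (.ax (.ax6 α β)) (.hyp hα))
  · exact hΔ.mem_of_deriv (.mp (.ax (.ax7 α β)) (.hyp hβ))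

theorem conj_mem_iff : .conj α β ∈ Δ ↔ α ∈ Δ ∧ β ∈ Δ := by
  refine ⟨fun h => ⟨?_, ?_⟩, fun ⟨hα, hβ⟩ => ?_⟩
  · exact hΔ.mem_of_deriv (.mp (.ax (.ax4 α β)) (.hyp h))
  · exact hΔ.mem_of_deriv (.mp (.ax (.ax5 α β)) (.hyp h))
  · exact hΔ.mem_of_deriv (.mp (.mp (.ax (.ax3 α β)) (.hyp hα)) (.hyp hβ))

theorem impl_mem_iff : .impl α β ∈ Δ ↔ α ∉ Δ ∨ β ∈ Δ := by
  refine ⟨fun h => or_iff_not_imp_left.mpr fun hα => ?_, ?_⟩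
  · exact hΔ.mem_of_deriv (.mp (.hyp h) (.hyp (not_not.mp hα)))
  rintro (hα | hβ)
  · exact (hΔ.mem_or_mem_of_disj_mem (hΔ.mem_of_deriv (.ax (.ax9 α β)))).resolve_left hα
  · exact hΔ.mem_of_deriv (.mp (.ax (.ax1 β α)) (.hyp hβ))

theorem neg_notMem (hα : α ∈ Δ) : .neg α ∉ Δ := fun hneg =>
  hΔ.not_deriv (.mp (.mp (.ax (.ax10 α φ)) (.hyp hα)) (.hyp hneg))

theorem star_mem (hα : α ∉ Δ) (hneg : .neg α ∉ Δ) : .star α ∈ Δ := by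
  have h11 := hΔ.mem_of_deriv (.ax (.ax11 α))
  rw [hΔ.disj_mem_iff, hΔ.disj_mem_iff] at h11
  tauto

end IsMaxNonDeriving

open scoped Classical in
noncomputable def charVal (Δ : Set MbF) (χ : MbF) : Fin 2 := if χ ∈ Δ then 1 else 0

theorem charVal_eq_one_iff {Δ : Set MbF} {χ : MbF} : charVal Δ χ = 1 ↔ χ ∈ Δ := by
  unfold charVal; split_ifs with h <;> simp [h]

theorem charVal_eq_zero_iff {Δ : Set MbF} {χ : MbF} : charVal Δ χ = 0 ↔ χ ∉ Δ := by
  unfold charVal; split_ifs with h <;> simp [h]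

theorem IsMaxNonDeriving.isMbVal_charVal {Δ : Set MbF} {φ : MbF} (hΔ : IsMaxNonDeriving φ Δ) :
    IsMbVal (charVal Δ) := by
  simp only [IsMbVal, charVal_eq_one_iff, charVal_eq_zero_iff]
  exact ⟨fun _ _ => hΔ.disj_mem_iff, fun _ _ => hΔ.conj_mem_iff, fun _ _ => hΔ.impl_mem_iff,
    fun _ => hΔ.neg_notMem, fun _ => hΔ.star_mem⟩

/-- Completeness of mb*. -/
theorem mb_completeness (Γ : Set MbF) (φ : MbF)
    (h : ∀ v : MbF → Fin 2, IsMbVal v → (∀ ψ ∈ Γ, v ψ = 1) → v φ = 1) :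
    MbDeriv Γ φ := by
  by_contra hΓ
  obtain ⟨Δ, hΓΔ, hΔ⟩ := exists_isMaxNonDeriving hΓ
  have hφ := h (charVal Δ) hΔ.isMbVal_charVal fun ψ hψ => charVal_eq_one_iff.mpr (hΓΔ hψ)
  exact hΔ.not_deriv (.hyp (charVal_eq_one_iff.mp hφ))
end

section
/- The logic mb* is paracomplete: there exists an mb*-formula α (for instance, any propositional variable) such that α ∨ ¬α is not derivable from the empty set in mb*, i.e., ⊬ α ∨ ¬α. -/
def MbTv : MbF → Bool
  | .var _ => false
  | .conj a b => MbTv a && MbTv b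
  | .disj a b => MbTv a || MbTv b
  | .impl a b => !MbTv a || MbTv b
  | .neg _ => false
  | .star _ => true

lemma MbTv_ax {φ : MbF} (h : MbAxiom φ) : MbTv φ = true := by
  cases h with
  | ax1 a b => simp only [MbTv]; cases MbTv a <;> cases MbTv b <;> simp
  | ax2 a b c =>
      simp only [MbTv]; cases MbTv a <;> cases MbTv b <;> cases MbTv c <;> simp
  | ax3 a b => simp only [MbTv]; cases MbTv a <;> cases MbTv b <;> simp
  | ax4 a b => simp only [MbTv]; cases MbTv a <;> cases MbTv b <;> simp
  | ax5 a b => simp only [MbTv]; cases MbTv a <;> cases MbTv b <;> simp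
  | ax6 a b => simp only [MbTv]; cases MbTv a <;> cases MbTv b <;> simp
  | ax7 a b => simp only [MbTv]; cases MbTv a <;> cases MbTv b <;> simp
  | ax8 a b c =>
      simp only [MbTv]; cases MbTv a <;> cases MbTv b <;> cases MbTv c <;> simp
  | ax9 a b => simp only [MbTv]; cases MbTv a <;> simp
  | ax10 a b => simp only [MbTv]; cases MbTv a <;> simp
  | ax11 a => simp [MbTv]

lemma MbTv_sound {φ : MbF} (h : MbDeriv ∅ φ) : MbTv φ = true := by
  induction h with
  | ax h => exact MbTv_ax h
  | hyp h => simp at h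
  | mp _ _ ih1 ih2 => simp [MbTv, ih2] at ih1; exact ih1

/-- mb* is paracomplete: for any propositional variable α, ⊬ α ∨ ¬α. -/
theorem mb_paracomplete (n : ℕ) :
    ¬ MbDeriv ∅ (.disj (.var n) (.neg (.var n))) := by
  intro h
  have := MbTv_sound h
  simp [MbTv] at this
end

section
/- There exists an mb*-formula α (for instance, any propositional variable) such that both α ∨ ★α and ¬α ∨ ★α fail to be derivable from the empty set in mb*, i.e., ⊬ α ∨ ★α and ⊬ ¬α ∨ ★α. -/
/-- Classical boolean evaluation with all variables set to `b`, negation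
classical, and ★ always 0. -/
def mbEv (b : Fin 2) : MbF → Fin 2
  | .var _ => b
  | .conj α β => if mbEv b α = 1 ∧ mbEv b β = 1 then 1 else 0
  | .disj α β => if mbEv b α = 1 ∨ mbEv b β = 1 then 1 else 0
  | .impl α β => if mbEv b α = 0 ∨ mbEv b β = 1 then 1 else 0
  | .neg α => if mbEv b α = 1 then 0 else 1
  | .star _ => 0

lemma fin2_cases (x : Fin 2) : x = 0 ∨ x = 1 := by omega

lemma mbEv_isVal (b : Fin 2) : IsMbVal (mbEv b) := by
  refine ⟨fun α β => ?_, fun α β => ?_, fun α β => ?_, fun α h => ?_, fun α h h' => ?_⟩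
  · simp only [mbEv]; split <;> simp_all
  · simp only [mbEv]; split <;> simp_all
  · simp only [mbEv]; split <;> simp_all
  · simp [mbEv, h]
  · simp [mbEv, h] at h'

lemma mbVal_sound {v : MbF → Fin 2} (hv : IsMbVal v) {φ : MbF}
    (h : MbDeriv ∅ φ) : v φ = 1 := by
  obtain ⟨hdisj, hconj, himpl, hneg, hstar⟩ := hv
  induction h with
  | hyp h => exact absurd h (Set.notMem_empty _)
  | mp h1 h2 ih1 ih2 =>
      rcases (himpl _ _).1 ih1 with h | h
      · omega
      · exact h
  | ax hax =>
      cases hax with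
      | ax1 α β =>
          rcases fin2_cases (v α) with h | h
          · exact (himpl _ _).2 (Or.inl h)
          · exact (himpl _ _).2 (Or.inr ((himpl _ _).2 (Or.inr h)))
      | ax2 α β γ =>
          rcases fin2_cases (v (MbF.impl α β)) with h | h
          · exact (himpl _ _).2 (Or.inl h)
          · refine (himpl _ _).2 (Or.inr ?_)
            rcases fin2_cases (v (MbF.impl α (MbF.impl β γ))) with h2 | h2
            · exact (himpl _ _).2 (Or.inl h2)
            · refine (himpl _ _).2 (Or.inr ?_)
              rcases fin2_cases (v α) with h3 | h3
              · exact (himpl _ _).2 (Or.inl h3)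
              · refine (himpl _ _).2 (Or.inr ?_)
                rcases (himpl _ _).1 h with h4 | h4
                · omega
                · rcases (himpl _ _).1 h2 with h5 | h5
                  · omega
                  · rcases (himpl _ _).1 h5 with h6 | h6
                    · omega
                    · exact h6
      | ax3 α β =>
          rcases fin2_cases (v α) with h | h
          · exact (himpl _ _).2 (Or.inl h)
          · refine (himpl _ _).2 (Or.inr ?_)
            rcases fin2_cases (v β) with h2 | h2
            · exact (himpl _ _).2 (Or.inl h2)
            · exact (himpl _ _).2 (Or.inr ((hconj _ _).2 ⟨h, h2⟩))
      | ax4 α β =>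
          rcases fin2_cases (v (MbF.conj α β)) with h | h
          · exact (himpl _ _).2 (Or.inl h)
          · exact (himpl _ _).2 (Or.inr ((hconj _ _).1 h).1)
      | ax5 α β =>
          rcases fin2_cases (v (MbF.conj α β)) with h | h
          · exact (himpl _ _).2 (Or.inl h)
          · exact (himpl _ _).2 (Or.inr ((hconj _ _).1 h).2)
      | ax6 α β =>
          rcases fin2_cases (v α) with h | h
          · exact (himpl _ _).2 (Or.inl h)
          · exact (himpl _ _).2 (Or.inr ((hdisj _ _).2 (Or.inl h)))
      | ax7 α β =>
          rcases fin2_cases (v β) with h | h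
          · exact (himpl _ _).2 (Or.inl h)
          · exact (himpl _ _).2 (Or.inr ((hdisj _ _).2 (Or.inr h)))
      | ax8 α β γ =>
          rcases fin2_cases (v (MbF.impl α γ)) with h | h
          · exact (himpl _ _).2 (Or.inl h)
          · refine (himpl _ _).2 (Or.inr ?_)
            rcases fin2_cases (v (MbF.impl β γ)) with h2 | h2
            · exact (himpl _ _).2 (Or.inl h2)
            · refine (himpl _ _).2 (Or.inr ?_)
              rcases fin2_cases (v (MbF.disj α β)) with h3 | h3
              · exact (himpl _ _).2 (Or.inl h3)
              · refine (himpl _ _).2 (Or.inr ?_)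
                rcases (hdisj _ _).1 h3 with h4 | h4
                · rcases (himpl _ _).1 h with h5 | h5
                  · omega
                  · exact h5
                · rcases (himpl _ _).1 h2 with h5 | h5
                  · omega
                  · exact h5
      | ax9 α β =>
          rcases fin2_cases (v α) with h | h
          · exact (hdisj _ _).2 (Or.inr ((himpl _ _).2 (Or.inl h)))
          · exact (hdisj _ _).2 (Or.inl h)
      | ax10 α β =>
          rcases fin2_cases (v α) with h | h
          · exact (himpl _ _).2 (Or.inl h)
          · refine (himpl _ _).2 (Or.inr ((himpl _ _).2 (Or.inl (hneg _ h))))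
      | ax11 α =>
          rcases fin2_cases (v α) with h | h
          · rcases fin2_cases (v (MbF.neg α)) with h2 | h2
            · exact (hdisj _ _).2 (Or.inr ((hdisj _ _).2 (Or.inr (hstar _ h h2))))
            · exact (hdisj _ _).2 (Or.inr ((hdisj _ _).2 (Or.inl h2)))
          · exact (hdisj _ _).2 (Or.inl h)

/-- For any propositional variable α, ⊬ α ∨ ★α and ⊬ ¬α ∨ ★α. -/
theorem mb_star_disjunctions_underivable (n : ℕ) :
    ¬ MbDeriv ∅ (.disj (.var n) (.star (.var n))) ∧
    ¬ MbDeriv ∅ (.disj (.neg (.var n)) (.star (.var n))) := by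
  constructor
  · intro h
    have := mbVal_sound (mbEv_isVal 0) h
    simp [mbEv] at this
  · intro h
    have := mbVal_sound (mbEv_isVal 1) h
    simp [mbEv] at this
end

section
/- For every mb*-probability function P and every mb*-formula α, P(α ∨ ¬α) = P(α) + P(¬α). -/
/-- P(α ∨ ¬α) = P(α) + P(¬α) for every mb*-probability function P. -/
theorem mb_prob_lem_additive (P : MbF → ℝ) (hP : IsMbProb P) (α : MbF) :
    P (.disj α (.neg α)) = P α + P (.neg α) := by
  obtain ⟨_, _, hanti, _, hadd⟩ := hP
  have hzero : P (.conj α (.neg α)) = 0 := by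
    apply hanti
    intro ψ
    have h0 : MbDeriv {MbF.conj α (.neg α)} (.conj α (.neg α)) := .hyp rfl
    have hα : MbDeriv {MbF.conj α (.neg α)} α := .mp (.ax (.ax4 α (.neg α))) h0
    have hn : MbDeriv {MbF.conj α (.neg α)} (.neg α) := .mp (.ax (.ax5 α (.neg α))) h0
    exact .mp (.mp (.ax (.ax10 α ψ)) hα) hn
  rw [hadd, hzero]; ring
end

section
/- Theorem of total paracomplete probability: for any mb*-probability function P and any mb*-formulas α and β, P(β) = P(β ∧ α) + P(β ∧ ¬α) + P(β ∧ ★α) − P(β ∧ (α ∨ ¬α) ∧ ★α). -/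
section MbAux

lemma mbId (Γ : Set MbF) (φ : MbF) : MbDeriv Γ (.impl φ φ) :=
  .mp (.mp (.ax (.ax2 φ (.impl φ φ) φ)) (.ax (.ax1 φ φ))) (.ax (.ax1 φ (.impl φ φ)))

lemma mbDed {Γ : Set MbF} {φ ψ : MbF} (h : MbDeriv (insert φ Γ) ψ) :
    MbDeriv Γ (.impl φ ψ) := by
  induction h with
  | ax a => exact .mp (.ax (.ax1 _ _)) (.ax a)
  | hyp h =>
    rcases Set.mem_insert_iff.mp h with rfl | h
    · exact mbId _ _
    · exact .mp (.ax (.ax1 _ _)) (.hyp h)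
  | mp _ _ ih1 ih2 => exact .mp (.mp (.ax (.ax2 _ _ _)) ih2) ih1

variable {Γ : Set MbF}

lemma mbAndI {a b : MbF} (h1 : MbDeriv Γ a) (h2 : MbDeriv Γ b) : MbDeriv Γ (.conj a b) :=
  .mp (.mp (.ax (.ax3 a b)) h1) h2

lemma mbAndE1 {a b : MbF} (h : MbDeriv Γ (.conj a b)) : MbDeriv Γ a :=
  .mp (.ax (.ax4 a b)) h

lemma mbAndE2 {a b : MbF} (h : MbDeriv Γ (.conj a b)) : MbDeriv Γ b :=
  .mp (.ax (.ax5 a b)) h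

lemma mbOrI1 {a : MbF} (b : MbF) (h : MbDeriv Γ a) : MbDeriv Γ (.disj a b) :=
  .mp (.ax (.ax6 a b)) h

lemma mbOrI2 (a : MbF) {b : MbF} (h : MbDeriv Γ b) : MbDeriv Γ (.disj a b) :=
  .mp (.ax (.ax7 a b)) h

lemma mbOrE {a b c : MbF} (h : MbDeriv Γ (.disj a b))
    (h1 : MbDeriv (insert a Γ) c) (h2 : MbDeriv (insert b Γ) c) : MbDeriv Γ c :=
  .mp (.mp (.mp (.ax (.ax8 a b c)) (mbDed h1)) (mbDed h2)) h

lemma mbExf {a : MbF} (b : MbF) (h1 : MbDeriv Γ a) (h2 : MbDeriv Γ (.neg a)) :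
    MbDeriv Γ b :=
  .mp (.mp (.ax (.ax10 a b)) h1) h2

end MbAux

/-- Theorem of total paracomplete probability. -/
theorem mb_total_paracomplete_probability (P : MbF → ℝ) (hP : IsMbProb P)
    (α β : MbF) :
    P β = P (.conj β α) + P (.conj β (.neg α)) + P (.conj β (.star α))
      - P (.conj (.conj β (.disj α (.neg α))) (.star α)) := by
  obtain ⟨hrange, htaut, hanti, hcomp, hadd⟩ := hP
  have Peq : ∀ a b : MbF, MbDeriv {a} b → MbDeriv {b} a → P a = P b :=
    fun a b h1 h2 => le_antisymm (hcomp b a h1) (hcomp a b h2)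
  set X : MbF := .conj β α with hX
  set Y : MbF := .conj β (.neg α) with hY
  set Z : MbF := .conj β (.star α) with hZ
  set W : MbF := .conj (.conj β (.disj α (.neg α))) (.star α) with hW
  have e1 : P β = P (MbF.disj X (.disj Y Z)) := by
    apply Peq
    · apply mbOrE (MbDeriv.ax (.ax11 α))
      · have hβ : MbDeriv (insert α {β}) β := .hyp (by simp)
        have hα : MbDeriv (insert α {β}) α := .hyp (by simp)
        exact mbOrI1 _ (mbAndI hβ hα)
      · apply mbOrE (MbDeriv.hyp (Set.mem_insert _ _))
        · have hβ : MbDeriv (insert (MbF.neg α) (insert (MbF.disj (.neg α) (.star α)) {β})) β :=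
            .hyp (by simp)
          have hn : MbDeriv (insert (MbF.neg α) (insert (MbF.disj (.neg α) (.star α)) {β}))
              (MbF.neg α) := .hyp (by simp)
          exact mbOrI2 _ (mbOrI1 _ (mbAndI hβ hn))
        · have hβ : MbDeriv (insert (MbF.star α) (insert (MbF.disj (.neg α) (.star α)) {β})) β :=
            .hyp (by simp)
          have hs : MbDeriv (insert (MbF.star α) (insert (MbF.disj (.neg α) (.star α)) {β}))
              (MbF.star α) := .hyp (by simp)
          exact mbOrI2 _ (mbOrI2 _ (mbAndI hβ hs))
    · apply mbOrE (show MbDeriv {MbF.disj X (.disj Y Z)} (MbF.disj X (.disj Y Z)) from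
        .hyp (by simp))
      · exact mbAndE1 (show MbDeriv (insert X {MbF.disj X (.disj Y Z)}) X from .hyp (by simp))
      · apply mbOrE (show MbDeriv (insert (MbF.disj Y Z) {MbF.disj X (.disj Y Z)})
            (MbF.disj Y Z) from .hyp (by simp))
        · exact mbAndE1 (show MbDeriv (insert Y (insert (MbF.disj Y Z)
            {MbF.disj X (.disj Y Z)})) Y from .hyp (by simp))
        · exact mbAndE1 (show MbDeriv (insert Z (insert (MbF.disj Y Z)
            {MbF.disj X (.disj Y Z)})) Z from .hyp (by simp))
  have e2 : P (MbF.conj X (.disj Y Z)) = P (MbF.conj X Z) := by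
    apply Peq
    · have h0 : MbDeriv {MbF.conj X (.disj Y Z)} (MbF.conj X (.disj Y Z)) := .hyp (by simp)
      apply mbOrE (mbAndE2 h0)
      · have h1 : MbDeriv (insert Y {MbF.conj X (.disj Y Z)}) (MbF.conj X (.disj Y Z)) :=
          .hyp (by simp)
        have h2 : MbDeriv (insert Y {MbF.conj X (.disj Y Z)}) Y := .hyp (by simp)
        exact mbExf _ (mbAndE2 (mbAndE1 h1)) (mbAndE2 h2)
      · have h1 : MbDeriv (insert Z {MbF.conj X (.disj Y Z)}) (MbF.conj X (.disj Y Z)) :=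
          .hyp (by simp)
        have h2 : MbDeriv (insert Z {MbF.conj X (.disj Y Z)}) Z := .hyp (by simp)
        exact mbAndI (mbAndE1 h1) h2
    · have h0 : MbDeriv {MbF.conj X Z} (MbF.conj X Z) := .hyp (by simp)
      exact mbAndI (mbAndE1 h0) (mbOrI2 _ (mbAndE2 h0))
  have e3 : P (MbF.conj (.conj X Z) (.conj Y Z)) = 0 := by
    apply hanti
    intro ψ
    have h0 : MbDeriv {MbF.conj (.conj X Z) (.conj Y Z)} (MbF.conj (.conj X Z) (.conj Y Z)) :=
      .hyp (by simp)
    exact mbExf ψ (mbAndE2 (mbAndE1 (mbAndE1 h0))) (mbAndE2 (mbAndE1 (mbAndE2 h0)))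
  have e4 : P W = P (MbF.disj (.conj X Z) (.conj Y Z)) := by
    apply Peq
    · have h0 : MbDeriv {W} W := .hyp (by simp)
      apply mbOrE (mbAndE2 (mbAndE1 h0))
      · have h1 : MbDeriv (insert α {W}) W := .hyp (by simp)
        have h2 : MbDeriv (insert α {W}) α := .hyp (by simp)
        exact mbOrI1 _ (mbAndI (mbAndI (mbAndE1 (mbAndE1 h1)) h2)
          (mbAndI (mbAndE1 (mbAndE1 h1)) (mbAndE2 h1)))
      · have h1 : MbDeriv (insert (MbF.neg α) {W}) W := .hyp (by simp)
        have h2 : MbDeriv (insert (MbF.neg α) {W}) (MbF.neg α) := .hyp (by simp)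
        exact mbOrI2 _ (mbAndI (mbAndI (mbAndE1 (mbAndE1 h1)) h2)
          (mbAndI (mbAndE1 (mbAndE1 h1)) (mbAndE2 h1)))
    · apply mbOrE (show MbDeriv {MbF.disj (.conj X Z) (.conj Y Z)}
          (MbF.disj (.conj X Z) (.conj Y Z)) from .hyp (by simp))
      · have h : MbDeriv (insert (MbF.conj X Z) {MbF.disj (.conj X Z) (.conj Y Z)})
            (MbF.conj X Z) := .hyp (by simp)
        exact mbAndI (mbAndI (mbAndE1 (mbAndE1 h)) (mbOrI1 _ (mbAndE2 (mbAndE1 h))))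
          (mbAndE2 (mbAndE2 h))
      · have h : MbDeriv (insert (MbF.conj Y Z) {MbF.disj (.conj X Z) (.conj Y Z)})
            (MbF.conj Y Z) := .hyp (by simp)
        exact mbAndI (mbAndI (mbAndE1 (mbAndE1 h)) (mbOrI2 _ (mbAndE2 (mbAndE1 h))))
          (mbAndE2 (mbAndE2 h))
  have add1 := hadd X (.disj Y Z)
  have add2 := hadd Y Z
  have add3 := hadd (.conj X Z) (.conj Y Z)
  linarith [e1, e2, e3, e4, add1, add2, add3]
end

section
/- Classical reduction of total paracomplete probability: for any mb*-probability function P and any mb*-formulas α and β, if P(★α) = 0 then P(β) = P(β ∧ α) + P(β ∧ ¬α). -/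
lemma mbComp {Γ : Set MbF} {φ ψ χ : MbF}
    (h1 : MbDeriv Γ (.impl φ ψ)) (h2 : MbDeriv Γ (.impl ψ χ)) :
    MbDeriv Γ (.impl φ χ) :=
  ((MbDeriv.ax (MbAxiom.ax2 φ ψ χ)).mp h1).mp
    ((MbDeriv.ax (MbAxiom.ax1 (MbF.impl ψ χ) φ)).mp h2)

/-- Classical reduction of total paracomplete probability. -/
theorem mb_total_probability_classical_case (P : MbF → ℝ) (hP : IsMbProb P)
    (α β : MbF) (hstar : P (.star α) = 0) :
    P β = P (.conj β α) + P (.conj β (.neg α)) := by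
  obtain ⟨hrange, htaut, hanti, hcomp, hadd⟩ := hP
  set A : MbF := .conj β α
  set B : MbF := .conj β (.neg α)
  set S : MbF := .conj β (.star α)
  set Y : MbF := .disj B S
  set D : MbF := .disj A Y
  -- {β} ⊢ D
  have hβ : MbDeriv {β} β := MbDeriv.hyp rfl
  have h1 : MbDeriv {β} (.impl α D) :=
    mbComp ((MbDeriv.ax (MbAxiom.ax3 β α)).mp hβ) (MbDeriv.ax (MbAxiom.ax6 A Y))
  have h2 : MbDeriv {β} (.impl (.neg α) D) :=
    mbComp ((MbDeriv.ax (MbAxiom.ax3 β (.neg α))).mp hβ)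
      (mbComp (MbDeriv.ax (MbAxiom.ax6 B S)) (MbDeriv.ax (MbAxiom.ax7 A Y)))
  have h3 : MbDeriv {β} (.impl (.star α) D) :=
    mbComp ((MbDeriv.ax (MbAxiom.ax3 β (.star α))).mp hβ)
      (mbComp (MbDeriv.ax (MbAxiom.ax7 B S)) (MbDeriv.ax (MbAxiom.ax7 A Y)))
  have h23 : MbDeriv {β} (.impl (.disj (.neg α) (.star α)) D) :=
    ((MbDeriv.ax (MbAxiom.ax8 (.neg α) (.star α) D)).mp h2).mp h3
  have hD : MbDeriv {β} D :=
    (((MbDeriv.ax (MbAxiom.ax8 α (.disj (.neg α) (.star α)) D)).mp h1).mp h23).mp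
      (MbDeriv.ax (MbAxiom.ax11 α))
  -- {A ∨ B} ⊢ β
  have hAB : MbDeriv {MbF.disj A B} β :=
    (((MbDeriv.ax (MbAxiom.ax8 A B β)).mp (MbDeriv.ax (MbAxiom.ax4 β α))).mp
      (MbDeriv.ax (MbAxiom.ax4 β (.neg α)))).mp (MbDeriv.hyp rfl)
  -- A ∧ B is antitautological
  have hC0 : P (.conj A B) = 0 := by
    apply hanti
    intro ψ
    have hC : MbDeriv {MbF.conj A B} (MbF.conj A B) := MbDeriv.hyp rfl
    have hα : MbDeriv {MbF.conj A B} α :=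
      (MbDeriv.ax (MbAxiom.ax5 β α)).mp ((MbDeriv.ax (MbAxiom.ax4 A B)).mp hC)
    have hnα : MbDeriv {MbF.conj A B} (.neg α) :=
      (MbDeriv.ax (MbAxiom.ax5 β (.neg α))).mp ((MbDeriv.ax (MbAxiom.ax5 A B)).mp hC)
    exact ((MbDeriv.ax (MbAxiom.ax10 α ψ)).mp hα).mp hnα
  -- P(S) = 0
  have hSstar : MbDeriv {S} (.star α) := (MbDeriv.ax (MbAxiom.ax5 β (.star α))).mp (MbDeriv.hyp rfl)
  have hS0 : P S = 0 :=
    le_antisymm (hstar ▸ hcomp _ _ hSstar) (hrange S).1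
  have e1 : P D = P A + P Y - P (.conj A Y) := hadd A Y
  have e2 : P Y = P B + P S - P (.conj B S) := hadd B S
  have e3 : P (.disj A B) = P A + P B - P (.conj A B) := hadd A B
  have l1 : P β ≤ P D := hcomp _ _ hD
  have l2 : P (.disj A B) ≤ P β := hcomp _ _ hAB
  have n1 := (hrange (.conj A Y)).1
  have n2 := (hrange (.conj B S)).1
  linarith
end

section
/- Paracomplete Bayes' conditionalization rule: let P be an mb*-probability function and α, β mb*-formulas such that P(α), P(¬α), P((α ∨ ¬α) ∧ ★α), and P(β) are all nonzero. Then P(α | β) = P(β | α)·P(α) / (P(β | α)·P(α) + P(β | ¬α)·P(¬α) + P(β | ★α)·P(★α) − K), where K = P(β | (α ∨ ¬α) ∧ ★α)·P((α ∨ ¬α) ∧ ★α), and where for formulas φ, ψ with P(ψ) ≠ 0 the conditional probability is P(φ | ψ) = P(φ ∧ ψ)/P(ψ). -/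
/-- Conditional probability: P(φ | ψ) = P(φ ∧ ψ) / P(ψ). -/
noncomputable def condP (P : MbF → ℝ) (φ ψ : MbF) : ℝ := P (.conj φ ψ) / P ψ

namespace MbAux

lemma identity (Γ : Set MbF) (φ : MbF) : MbDeriv Γ (.impl φ φ) :=
  .mp (.mp (.ax (.ax2 φ (.impl φ φ) φ)) (.ax (.ax1 φ φ))) (.ax (.ax1 φ (.impl φ φ)))

lemma deduction {Γ : Set MbF} {φ ψ : MbF} (h : MbDeriv (insert φ Γ) ψ) :
    MbDeriv Γ (.impl φ ψ) := by
  induction h with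
  | ax a => exact .mp (.ax (.ax1 _ φ)) (.ax a)
  | @hyp χ hm =>
    rcases hm with h | hm
    · subst h; exact identity _ _
    · exact .mp (.ax (.ax1 _ φ)) (.hyp hm)
  | mp _ _ ih1 ih2 => exact .mp (.mp (.ax (.ax2 _ _ _)) ih2) ih1

variable {Γ : Set MbF} {φ ψ χ : MbF}

lemma andI (h1 : MbDeriv Γ φ) (h2 : MbDeriv Γ ψ) : MbDeriv Γ (.conj φ ψ) :=
  .mp (.mp (.ax (.ax3 _ _)) h1) h2

lemma andL (h : MbDeriv Γ (.conj φ ψ)) : MbDeriv Γ φ := .mp (.ax (.ax4 _ _)) h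
lemma andR (h : MbDeriv Γ (.conj φ ψ)) : MbDeriv Γ ψ := .mp (.ax (.ax5 _ _)) h
lemma orL (ψ : MbF) (h : MbDeriv Γ φ) : MbDeriv Γ (.disj φ ψ) := .mp (.ax (.ax6 _ _)) h
lemma orR (φ : MbF) (h : MbDeriv Γ ψ) : MbDeriv Γ (.disj φ ψ) := .mp (.ax (.ax7 _ _)) h
lemma orE (h1 : MbDeriv Γ (.impl φ χ)) (h2 : MbDeriv Γ (.impl ψ χ))
    (h : MbDeriv Γ (.disj φ ψ)) : MbDeriv Γ χ :=
  .mp (.mp (.mp (.ax (.ax8 _ _ _)) h1) h2) h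

lemma d_comm (x y : MbF) : MbDeriv {MbF.conj x y} (.conj y x) :=
  andI (andR (.hyp rfl)) (andL (.hyp rfl))

lemma d_explode (b x : MbF) (ψ : MbF) :
    MbDeriv {MbF.conj (.conj b x) (.conj b (.neg x))} ψ :=
  .mp (.mp (.ax (.ax10 x ψ)) (andR (andL (.hyp rfl)))) (andR (andR (.hyp rfl)))

lemma d_dist1 (b x y : MbF) :
    MbDeriv {MbF.conj b (.disj x y)} (.disj (.conj b x) (.conj b y)) := by
  refine orE ?_ ?_ (andR (.hyp rfl))
  · exact deduction (orL _ (andI (andL (.hyp (Set.mem_insert_of_mem _ rfl)))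
      (.hyp (Set.mem_insert _ _))))
  · exact deduction (orR _ (andI (andL (.hyp (Set.mem_insert_of_mem _ rfl)))
      (.hyp (Set.mem_insert _ _))))

lemma d_dist2 (b x y : MbF) :
    MbDeriv {MbF.disj (.conj b x) (.conj b y)} (.conj b (.disj x y)) := by
  refine orE ?_ ?_ (.hyp rfl)
  · exact deduction (andI (andL (.hyp (Set.mem_insert _ _)))
      (orL _ (andR (.hyp (Set.mem_insert _ _)))))
  · exact deduction (andI (andL (.hyp (Set.mem_insert _ _)))
      (orR _ (andR (.hyp (Set.mem_insert _ _)))))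

lemma d_total (Γ : Set MbF) (α : MbF) :
    MbDeriv Γ (.disj (.disj α (.neg α)) (.star α)) := by
  refine orE ?_ ?_ (.ax (.ax11 α))
  · exact deduction (orL _ (orL _ (.hyp (Set.mem_insert _ _))))
  · refine deduction (orE ?_ ?_ (.hyp (Set.mem_insert _ _)))
    · exact deduction (orL _ (orR _ (.hyp (Set.mem_insert _ _))))
    · exact deduction (orR _ (.hyp (Set.mem_insert _ _)))

lemma d_reassoc1 (b t s : MbF) :
    MbDeriv {MbF.conj (.conj b t) (.conj b s)} (.conj b (.conj t s)) :=
  andI (andL (andL (.hyp rfl))) (andI (andR (andL (.hyp rfl))) (andR (andR (.hyp rfl))))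

lemma d_reassoc2 (b t s : MbF) :
    MbDeriv {MbF.conj b (.conj t s)} (.conj (.conj b t) (.conj b s)) :=
  andI (andI (andL (.hyp rfl)) (andL (andR (.hyp rfl))))
    (andI (andL (.hyp rfl)) (andR (andR (.hyp rfl))))

end MbAux

open MbAux in
/-- Paracomplete Bayes' conditionalization rule. -/
theorem mb_paracomplete_bayes (P : MbF → ℝ) (hP : IsMbProb P) (α β : MbF)
    (hα : P α ≠ 0) (hnα : P (.neg α) ≠ 0)
    (hK : P (.conj (.disj α (.neg α)) (.star α)) ≠ 0) (hβ : P β ≠ 0) :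
    condP P α β = condP P β α * P α /
      (condP P β α * P α + condP P β (.neg α) * P (.neg α)
        + condP P β (.star α) * P (.star α)
        - condP P β (.conj (.disj α (.neg α)) (.star α)) *
            P (.conj (.disj α (.neg α)) (.star α))) := by
  obtain ⟨hrange, htaut, hanti, hcomp, hadd⟩ := hP
  have Peq : ∀ φ ψ : MbF, MbDeriv {ψ} φ → MbDeriv {φ} ψ → P φ = P ψ :=
    fun φ ψ h1 h2 => le_antisymm (hcomp ψ φ h2) (hcomp φ ψ h1)
  set T : MbF := .disj α (.neg α) with hT
  set S : MbF := .star α with hS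
  -- additivity step 1
  have h0 : P (.conj (.conj β α) (.conj β (.neg α))) = 0 :=
    hanti _ (d_explode β α)
  have hE2 : P (.conj β T) = P (.conj β α) + P (.conj β (.neg α)) := by
    have e1 : P (.conj β T) = P (.disj (.conj β α) (.conj β (.neg α))) :=
      Peq _ _ (d_dist2 β α (.neg α)) (d_dist1 β α (.neg α))
    rw [e1, hadd, h0, sub_zero]
  -- additivity step 2
  have hβT : P β = P (.conj β (.disj T S)) := by
    refine Peq _ _ ?_ ?_
    · exact andL (.hyp rfl)
    · exact andI (.hyp rfl) (d_total _ α)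
  have hE3 : P β = P (.conj β T) + P (.conj β S) - P (.conj β (.conj T S)) := by
    have e1 : P (.conj β (.disj T S)) = P (.disj (.conj β T) (.conj β S)) :=
      Peq _ _ (d_dist2 β T S) (d_dist1 β T S)
    have e2 : P (.conj (.conj β T) (.conj β S)) = P (.conj β (.conj T S)) :=
      Peq _ _ (d_reassoc2 β T S) (d_reassoc1 β T S)
    rw [hβT, e1, hadd, e2]
  have hAab : P (.conj α β) = P (.conj β α) := Peq _ _ (d_comm β α) (d_comm α β)
  -- the star term
  have hs : P (.conj β S) / P S * P S = P (.conj β S) := by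
    rcases eq_or_ne (P S) 0 with h | h
    · have hle : P (.conj β S) ≤ P S := hcomp S _ (andR (.hyp rfl))
      have hge : 0 ≤ P (.conj β S) := (hrange _).1
      have : P (.conj β S) = 0 := le_antisymm (h ▸ hle) hge
      rw [this, h]; ring
    · exact div_mul_cancel₀ _ h
  show P (.conj α β) / P β = _
  unfold condP
  rw [div_mul_cancel₀ _ hα, div_mul_cancel₀ _ hnα, hs, div_mul_cancel₀ _ hK, hAab]
  congr 1
  linarith [hE2, hE3]
end
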